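/- On ℝ⁴ with coordinates (x, y, t, w) and standard basis vectors e_x, e_y, e_t, e_w, define the smooth vector fields (as maps ℝ⁴ → ℝ⁴): v₁(p) = e_t, v₂(p) = e_x, v₃(p) = e_y, v₄(x,y,t,w) = t e_t + e_w, v₅(x,y,t,w) = y e_x − x e_y, v₆(x,y,t,w) = x e_x + y e_y − 2 e_w. Then their Lie brackets [V, W](p) = DW(p)(V(p)) − DV(p)(W(p)) satisfy: [v₁, v₄] = v₁, [v₂, v₅] = −v₃, [v₃, v₅] = v₂, [v₂, v₆] = v₂, [v₃, v₆] = v₃, and all other brackets [v_i, v_j] with 1 ≤ i < j ≤ 6 vanish identically. -/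

import Mathlib

/-- The Lie bracket of two `C¹` vector fields on `ℝ⁴`,
`[V, W](p) = DW(p)(V(p)) − DV(p)(W(p))`. -/
noncomputable def lieBracketVF (V W : (Fin 4 → ℝ) → (Fin 4 → ℝ)) : (Fin 4 → ℝ) → (Fin 4 → ℝ) :=
  fun p => fderiv ℝ W p (V p) - fderiv ℝ V p (W p)

/-- Standard basis vector `e_x` on `ℝ⁴` with coordinates `(x, y, t, w)`. -/
def eX : Fin 4 → ℝ := Pi.single 0 1
/-- Standard basis vector `e_y`. -/
def eY : Fin 4 → ℝ := Pi.single 1 1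
/-- Standard basis vector `e_t`. -/
def eT : Fin 4 → ℝ := Pi.single 2 1
/-- Standard basis vector `e_w`. -/
def eW : Fin 4 → ℝ := Pi.single 3 1

/-- `v₁ = ∂_t`. -/
def vf1 : (Fin 4 → ℝ) → (Fin 4 → ℝ) := fun _ => eT
/-- `v₂ = ∂_x`. -/
def vf2 : (Fin 4 → ℝ) → (Fin 4 → ℝ) := fun _ => eX
/-- `v₃ = ∂_y`. -/
def vf3 : (Fin 4 → ℝ) → (Fin 4 → ℝ) := fun _ => eY
/-- `v₄ = t ∂_t + ∂_w`. -/
def vf4 : (Fin 4 → ℝ) → (Fin 4 → ℝ) := fun p => p 2 • eT + eW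
/-- `v₅ = y ∂_x − x ∂_y`. -/
def vf5 : (Fin 4 → ℝ) → (Fin 4 → ℝ) := fun p => p 1 • eX - p 0 • eY
/-- `v₆ = x ∂_x + y ∂_y − 2 ∂_w`. -/
def vf6 : (Fin 4 → ℝ) → (Fin 4 → ℝ) := fun p => p 0 • eX + p 1 • eY - (2 : ℝ) • eW

/-! Each `vᵢ` is affine, so its derivative is the constant linear part `Aᵢ` and
`[vᵢ, vⱼ](p) = Aⱼ (vᵢ p) − Aᵢ (vⱼ p)`; the table is then a coordinate computation with the
basis vectors `Pi.single k 1`. -/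

open ContinuousLinearMap

theorem fderiv_vf1 (p : Fin 4 → ℝ) : fderiv ℝ vf1 p = 0 := fderiv_const_apply eT

theorem fderiv_vf2 (p : Fin 4 → ℝ) : fderiv ℝ vf2 p = 0 := fderiv_const_apply eX

theorem fderiv_vf3 (p : Fin 4 → ℝ) : fderiv ℝ vf3 p = 0 := fderiv_const_apply eY

theorem fderiv_vf4 (p : Fin 4 → ℝ) : fderiv ℝ vf4 p = (proj 2).smulRight eT :=
  (((hasFDerivAt_apply 2 p).smul_const eT).add_const eW).fderiv

theorem fderiv_vf5 (p : Fin 4 → ℝ) :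
    fderiv ℝ vf5 p = (proj 1).smulRight eX - (proj 0).smulRight eY :=
  (((hasFDerivAt_apply 1 p).smul_const eX).sub ((hasFDerivAt_apply 0 p).smul_const eY)).fderiv

theorem fderiv_vf6 (p : Fin 4 → ℝ) :
    fderiv ℝ vf6 p = (proj 0).smulRight eX + (proj 1).smulRight eY :=
  ((((hasFDerivAt_apply 0 p).smul_const eX).add
    ((hasFDerivAt_apply 1 p).smul_const eY)).sub_const _).fderiv

/-- Commutator table (3.6) of the symmetry algebra of the surface Ricci flow:
`[v₁,v₄] = v₁`, `[v₂,v₅] = −v₃`, `[v₃,v₅] = v₂`, `[v₂,v₆] = v₂`,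
`[v₃,v₆] = v₃`, and all other brackets `[v_i, v_j]` with `i < j` vanish. -/
theorem ricci_flow_symmetry_commutator_table :
    lieBracketVF vf1 vf4 = vf1 ∧
    lieBracketVF vf2 vf5 = -vf3 ∧
    lieBracketVF vf3 vf5 = vf2 ∧
    lieBracketVF vf2 vf6 = vf2 ∧
    lieBracketVF vf3 vf6 = vf3 ∧
    lieBracketVF vf1 vf2 = 0 ∧
    lieBracketVF vf1 vf3 = 0 ∧
    lieBracketVF vf1 vf5 = 0 ∧
    lieBracketVF vf1 vf6 = 0 ∧
    lieBracketVF vf2 vf3 = 0 ∧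
    lieBracketVF vf2 vf4 = 0 ∧
    lieBracketVF vf3 vf4 = 0 ∧
    lieBracketVF vf4 vf5 = 0 ∧
    lieBracketVF vf4 vf6 = 0 ∧
    lieBracketVF vf5 vf6 = 0 := by
  refine ⟨?_, ?_, ?_, ?_, ?_, ?_, ?_, ?_, ?_, ?_, ?_, ?_, ?_, ?_, ?_⟩ <;> funext p <;>
    simp [lieBracketVF, fderiv_vf1, fderiv_vf2, fderiv_vf3, fderiv_vf4, fderiv_vf5, fderiv_vf6,
      vf1, vf2, vf3, vf4, vf5, vf6, eX, eY, eT, eW]
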